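/- Let N ≥ 4 be an integer and a an integer with 2 ≤ a ≤ N/2. Set ω = (N² − 3aN + 3a²)^{−1/2} and let x* ∈ ℝ^N be any point with exactly a coordinates equal to (N−a)ω and exactly N−a coordinates equal to −aω. Then V_0(x*) = −aN(N−a) / (4(N² − 3aN + 3a²)). Moreover, set ω' = (N² − 3aN + 3(a² − a + 1))^{−1/2} and let z* ∈ ℝ^N be any point with exactly one coordinate equal to (2a−N−1)ω', exactly a−1 coordinates equal to (N−a−1)ω', and exactly N−a coordinates equal to (2−a)ω'. Then V_0(z*) = −(aN² − (a² + 8a − 8)N + 9a(a−1)) / (4(N² − 3aN + 3a² − 3a + 3)). -/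

import Mathlib

/-- The uncoupled potential `V₀(x) = Σᵢ (xᵢ⁴/4 - xᵢ²/2)`. -/
noncomputable def V0 {N : ℕ} (x : Fin N → ℝ) : ℝ := ∑ i, ((x i) ^ 4 / 4 - (x i) ^ 2 / 2)

/-! Grouping the coordinates by value turns `V₀` into a weighted sum over two or three levels, and
substituting `ω² = 1 / D` leaves a rational identity in `N` and `a`. The normalisations are exactly
those for which `Σ xᵢ⁴ = Σ xᵢ²` (for the first point because `(N - a)³ + a³ = N D`), so that
`V₀ = -Σ xᵢ² / 4` on both points. -/

open Finset

theorem sum_comp_eq_sum_ncard_smul {ι α M : Type*} [Fintype ι] [DecidableEq α]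
    [AddCommMonoid M] (x : ι → α) (g : α → M) (s : Finset α)
    (hs : ∑ v ∈ s, {i | x i = v}.ncard = Fintype.card ι) :
    ∑ i, g (x i) = ∑ v ∈ s, {i | x i = v}.ncard • g v := by
  have hfiber (v : α) : {i | x i = v}.ncard = #{i | x i = v} := by
    rw [← Set.ncard_coe_finset]; simp
  have hmaps : ∀ i ∈ (univ : Finset ι), x i ∈ s := by
    set t : Finset ι := {i | x i ∈ s}
    have hcard : #t = #(univ : Finset ι) := by
      rw [card_eq_sum_card_fiberwise (s := t) (t := s) fun i hi => (mem_filter.mp hi).2, card_univ,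
        ← hs]
      refine sum_congr rfl fun v hv => ?_
      rw [hfiber, filter_filter]
      congr 1; ext i; simp only [mem_filter, mem_univ, true_and]
      exact ⟨fun h => h.2, fun h => ⟨h ▸ hv, h⟩⟩
    intro i _
    have hi : i ∈ t := eq_univ_of_card t hcard ▸ mem_univ i
    simpa [t] using hi
  rw [← sum_fiberwise_of_maps_to hmaps]
  refine sum_congr rfl fun v _ => ?_
  rw [hfiber, ← sum_const]
  exact sum_congr rfl fun i hi => by rw [(mem_filter.mp hi).2]

theorem V0_eq_of_two_levels {N : ℕ} (x : Fin N → ℝ) {u v : ℝ} (huv : u ≠ v) {m n : ℕ}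
    (hu : {i | x i = u}.ncard = m) (hv : {i | x i = v}.ncard = n) (hmn : m + n = N) :
    V0 x = m * (u ^ 4 / 4 - u ^ 2 / 2) + n * (v ^ 4 / 4 - v ^ 2 / 2) := by
  rw [V0, sum_comp_eq_sum_ncard_smul x (fun t => t ^ 4 / 4 - t ^ 2 / 2) {u, v}, sum_pair huv,
    hu, hv, nsmul_eq_mul, nsmul_eq_mul]
  rwa [sum_pair huv, hu, hv, Fintype.card_fin]

theorem V0_eq_of_three_levels {N : ℕ} (x : Fin N → ℝ) {u v w : ℝ} (huv : u ≠ v) (huw : u ≠ w)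
    (hvw : v ≠ w) {l m n : ℕ} (hu : {i | x i = u}.ncard = l) (hv : {i | x i = v}.ncard = m)
    (hw : {i | x i = w}.ncard = n) (hlmn : l + m + n = N) :
    V0 x = l * (u ^ 4 / 4 - u ^ 2 / 2) + m * (v ^ 4 / 4 - v ^ 2 / 2)
      + n * (w ^ 4 / 4 - w ^ 2 / 2) := by
  have hu_notMem : u ∉ ({v, w} : Finset ℝ) := by simp [huv, huw]
  rw [V0, sum_comp_eq_sum_ncard_smul x (fun t => t ^ 4 / 4 - t ^ 2 / 2) {u, v, w},
    sum_insert hu_notMem, sum_pair hvw, hu, hv, hw, nsmul_eq_mul, nsmul_eq_mul, nsmul_eq_mul,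
    add_assoc]
  rw [sum_insert hu_notMem, sum_pair hvw, hu, hv, hw, Fintype.card_fin, ← add_assoc, hlmn]

theorem quartic_mul_inv_sqrt (c : ℝ) {D : ℝ} (hD : 0 ≤ D) :
    (c * (√D)⁻¹) ^ 4 / 4 - (c * (√D)⁻¹) ^ 2 / 2 = c ^ 4 / (4 * D ^ 2) - c ^ 2 / (2 * D) := by
  have hsq : (c * (√D)⁻¹) ^ 2 = c ^ 2 / D := by
    rw [mul_pow, inv_pow, Real.sq_sqrt hD, div_eq_mul_inv]
  rw [show (c * (√D)⁻¹) ^ 4 = ((c * (√D)⁻¹) ^ 2) ^ 2 by ring, hsq]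
  ring

theorem V0_eq_of_two_level_pattern {N a : ℕ} (hN : 0 < N) (haN : a ≤ N) {ω : ℝ}
    (hω : ω = (√((N : ℝ) ^ 2 - 3 * a * N + 3 * a ^ 2))⁻¹) {x : Fin N → ℝ}
    (hx1 : {i | x i = ((N : ℝ) - a) * ω}.ncard = a)
    (hx2 : {i | x i = -(a : ℝ) * ω}.ncard = N - a) :
    V0 x = -((a : ℝ) * N * (N - a)) / (4 * ((N : ℝ) ^ 2 - 3 * a * N + 3 * a ^ 2)) := by
  have hNR : (0 : ℝ) < N := by exact_mod_cast hN
  have hD : (0 : ℝ) < (N : ℝ) ^ 2 - 3 * a * N + 3 * a ^ 2 := by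
    nlinarith [sq_nonneg ((N : ℝ) - 2 * a)]
  have hω_ne : ω ≠ 0 := hω ▸ inv_ne_zero (Real.sqrt_pos.mpr hD).ne'
  have hlevels : ((N : ℝ) - a) * ω ≠ -(a : ℝ) * ω := fun h => by
    have := mul_right_cancel₀ hω_ne h
    linarith
  rw [V0_eq_of_two_levels x hlevels hx1 hx2 (by omega), Nat.cast_sub haN, hω,
    quartic_mul_inv_sqrt _ hD.le, quartic_mul_inv_sqrt _ hD.le]
  set D := (N : ℝ) ^ 2 - 3 * a * N + 3 * a ^ 2 with hD_def
  have hD_ne := hD.ne'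
  field_simp
  rw [hD_def]
  ring

theorem V0_eq_of_three_level_pattern {N a : ℕ} (ha : 2 ≤ a) (ha2 : 2 * a ≤ N) {ω' : ℝ}
    (hω' : ω' = (√((N : ℝ) ^ 2 - 3 * a * N + 3 * ((a : ℝ) ^ 2 - a + 1)))⁻¹) {z : Fin N → ℝ}
    (hz0 : {i | z i = (2 * (a : ℝ) - N - 1) * ω'}.ncard = 1)
    (hz1 : {i | z i = ((N : ℝ) - a - 1) * ω'}.ncard = a - 1)
    (hz2 : {i | z i = (2 - (a : ℝ)) * ω'}.ncard = N - a) :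
    V0 z = -((a : ℝ) * N ^ 2 - ((a : ℝ) ^ 2 + 8 * a - 8) * N + 9 * a * (a - 1))
      / (4 * ((N : ℝ) ^ 2 - 3 * a * N + 3 * a ^ 2 - 3 * a + 3)) := by
  have haR : (2 : ℝ) ≤ a := by exact_mod_cast ha
  have ha2R : 2 * (a : ℝ) ≤ N := by exact_mod_cast ha2
  have hD : (0 : ℝ) < (N : ℝ) ^ 2 - 3 * a * N + 3 * ((a : ℝ) ^ 2 - a + 1) := by
    nlinarith [sq_nonneg (2 * (N : ℝ) - 3 * a), sq_nonneg ((a : ℝ) - 2)]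
  have hω'_ne : ω' ≠ 0 := hω' ▸ inv_ne_zero (Real.sqrt_pos.mpr hD).ne'
  have h01 : (2 * (a : ℝ) - N - 1) * ω' ≠ ((N : ℝ) - a - 1) * ω' := fun h => by
    have := mul_right_cancel₀ hω'_ne h
    linarith
  have h12 : ((N : ℝ) - a - 1) * ω' ≠ (2 - (a : ℝ)) * ω' := fun h => by
    have := mul_right_cancel₀ hω'_ne h
    linarith
  -- these two levels do coincide for `(N, a) = (6, 3)`, but then their counts `1` and `N - a` clash
  have h02 : (2 * (a : ℝ) - N - 1) * ω' ≠ (2 - (a : ℝ)) * ω' := fun h => by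
    rw [h, hz2] at hz0
    omega
  rw [V0_eq_of_three_levels z h01 h02 h12 hz0 hz1 hz2 (by omega), Nat.cast_sub (by omega : a ≤ N),
    Nat.cast_sub (by omega : 1 ≤ a), hω']
  simp only [quartic_mul_inv_sqrt _ hD.le, Nat.cast_one]
  set D := (N : ℝ) ^ 2 - 3 * a * N + 3 * ((a : ℝ) ^ 2 - a + 1) with hD_def
  have hD_ne := hD.ne'
  rw [show (N : ℝ) ^ 2 - 3 * a * N + 3 * a ^ 2 - 3 * a + 3 = D by ring]
  field_simp
  rw [hD_def]
  ring

theorem stmt_9_general (N a : ℕ) (ha : 2 ≤ a) (ha2 : 2 * a ≤ N)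
    (ω ω' : ℝ)
    (hω : ω = (Real.sqrt ((N : ℝ) ^ 2 - 3 * (a : ℝ) * (N : ℝ) + 3 * (a : ℝ) ^ 2))⁻¹)
    (hω' : ω' = (Real.sqrt ((N : ℝ) ^ 2 - 3 * (a : ℝ) * (N : ℝ)
      + 3 * ((a : ℝ) ^ 2 - (a : ℝ) + 1)))⁻¹)
    (x z : Fin N → ℝ)
    (hx1 : {i | x i = ((N : ℝ) - a) * ω}.ncard = a)
    (hx2 : {i | x i = -(a : ℝ) * ω}.ncard = N - a)
    (hz0 : {i | z i = (2 * (a : ℝ) - N - 1) * ω'}.ncard = 1)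
    (hz1 : {i | z i = ((N : ℝ) - a - 1) * ω'}.ncard = a - 1)
    (hz2 : {i | z i = (2 - (a : ℝ)) * ω'}.ncard = N - a) :
    V0 x = -((a : ℝ) * (N : ℝ) * ((N : ℝ) - a))
        / (4 * ((N : ℝ) ^ 2 - 3 * (a : ℝ) * (N : ℝ) + 3 * (a : ℝ) ^ 2)) ∧
    V0 z = -((a : ℝ) * (N : ℝ) ^ 2 - ((a : ℝ) ^ 2 + 8 * (a : ℝ) - 8) * (N : ℝ)
          + 9 * (a : ℝ) * ((a : ℝ) - 1))
        / (4 * ((N : ℝ) ^ 2 - 3 * (a : ℝ) * (N : ℝ) + 3 * (a : ℝ) ^ 2 - 3 * (a : ℝ) + 3)) :=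
  ⟨V0_eq_of_two_level_pattern (by omega) (by omega) hω hx1 hx2,
    V0_eq_of_three_level_pattern ha ha2 hω' hz0 hz1 hz2⟩

/-- Values of the uncoupled potential on the families of stationary points
with coordinate patterns `(0, a, N-a)` and `(1, a-1, N-a)`. -/
theorem stmt_9 (N a : ℕ) (hN : 4 ≤ N) (ha : 2 ≤ a) (ha2 : 2 * a ≤ N)
    (ω ω' : ℝ)
    (hω : ω = (Real.sqrt ((N : ℝ) ^ 2 - 3 * (a : ℝ) * (N : ℝ) + 3 * (a : ℝ) ^ 2))⁻¹)
    (hω' : ω' = (Real.sqrt ((N : ℝ) ^ 2 - 3 * (a : ℝ) * (N : ℝ)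
      + 3 * ((a : ℝ) ^ 2 - (a : ℝ) + 1)))⁻¹)
    (x z : Fin N → ℝ)
    (hx1 : {i | x i = ((N : ℝ) - a) * ω}.ncard = a)
    (hx2 : {i | x i = -(a : ℝ) * ω}.ncard = N - a)
    (hz0 : {i | z i = (2 * (a : ℝ) - N - 1) * ω'}.ncard = 1)
    (hz1 : {i | z i = ((N : ℝ) - a - 1) * ω'}.ncard = a - 1)
    (hz2 : {i | z i = (2 - (a : ℝ)) * ω'}.ncard = N - a) :
    V0 x = -((a : ℝ) * (N : ℝ) * ((N : ℝ) - a))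
        / (4 * ((N : ℝ) ^ 2 - 3 * (a : ℝ) * (N : ℝ) + 3 * (a : ℝ) ^ 2)) ∧
    V0 z = -((a : ℝ) * (N : ℝ) ^ 2 - ((a : ℝ) ^ 2 + 8 * (a : ℝ) - 8) * (N : ℝ)
          + 9 * (a : ℝ) * ((a : ℝ) - 1))
        / (4 * ((N : ℝ) ^ 2 - 3 * (a : ℝ) * (N : ℝ) + 3 * (a : ℝ) ^ 2 - 3 * (a : ℝ) + 3)) :=
  stmt_9_general N a ha ha2 ω ω' hω hω' x z hx1 hx2 hz0 hz1 hz2
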